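/- arXiv:1502.04084 — 6 statements merged into one kernel-verified Lean document; each statement's English description precedes it below -/
import Mathlib

section
/- Let m ≥ 0, σ(w) = w³ + m·w, and let w_L ≠ w_R be reals with q = (σ(w_L) − σ(w_R))/(w_L − w_R). Then the Liu admissibility criterion for the 1-shock from w_L to w_R — namely, for every w strictly between w_L and w_R (so w ≠ w_R), (σ(w) − σ(w_R))/(w − w_R) ≥ q — holds if and only if (w_R − w_L)·(w_R + 2·w_L) ≥ 0. -/
/-!
The chord slope of `σ` between `a ≠ b` is `a² + ab + b² + m`, so the Liu inequality at `w`
reads `(w - w_L)(w + w_L + w_R) ≥ 0`. Between `w_L` and `w_R` the first factor has the sign of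
`w_R - w_L`, and the affine second factor, ranging over an open interval, satisfies the
matching sign condition exactly when its value `w_R + 2 w_L` at the endpoint `w = w_L` does.
-/

open Set

lemma cubic_chord_slope (m a b : ℝ) (hab : a ≠ b) :
    ((a ^ 3 + m * a) - (b ^ 3 + m * b)) / (a - b) = a ^ 2 + a * b + b ^ 2 + m := by
  field_simp [sub_ne_zero.mpr hab]
  ring

lemma forall_between_mul_nonneg_iff {a b : ℝ} (hab : a ≠ b) :
    (∀ w, (a < w ∧ w < b) ∨ (b < w ∧ w < a) → 0 ≤ (w - a) * (w + a + b)) ↔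
      0 ≤ (b - a) * (b + 2 * a) := by
  rcases hab.lt_or_gt with hab | hba
  · have hbound : -(a + b) ∈ lowerBounds (Ioo a b) ↔ -(a + b) ≤ a := by
      rw [lowerBounds_Ioo hab, mem_Iic]
    rw [mul_nonneg_iff_of_pos_left (sub_pos.mpr hab)]
    refine Iff.trans ?_ (hbound.trans (by constructor <;> intro <;> linarith))
    refine forall_congr' fun w => ⟨fun h ⟨haw, hwb⟩ => ?_, fun h hw => ?_⟩
    · linarith [(mul_nonneg_iff_of_pos_left (sub_pos.mpr haw)).mp (h (.inl ⟨haw, hwb⟩))]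
    · rcases hw with ⟨haw, hwb⟩ | ⟨hbw, hwa⟩
      · exact mul_nonneg (sub_pos.mpr haw).le (by linarith [h ⟨haw, hwb⟩])
      · linarith
  · have hbound : -(a + b) ∈ upperBounds (Ioo b a) ↔ a ≤ -(a + b) := by
      rw [upperBounds_Ioo hba, mem_Ici]
    rw [← neg_mul_neg, mul_nonneg_iff_of_pos_left (by linarith)]
    refine Iff.trans ?_ (hbound.trans (by constructor <;> intro <;> linarith))
    refine forall_congr' fun w => ⟨fun h ⟨hbw, hwa⟩ => ?_, fun h hw => ?_⟩
    · have := h (.inr ⟨hbw, hwa⟩)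
      rw [← neg_mul_neg, mul_nonneg_iff_of_pos_left (by linarith)] at this
      linarith
    · rcases hw with ⟨haw, hwb⟩ | ⟨hbw, hwa⟩
      · linarith
      · exact mul_nonneg_of_nonpos_of_nonpos (sub_neg.mpr hwa).le (by linarith [h ⟨hbw, hwa⟩])

theorem stmt_8_general (m : ℝ) (σ : ℝ → ℝ) (hσ : ∀ w, σ w = w ^ 3 + m * w)
    (wL wR : ℝ) (hne : wL ≠ wR)
    (q : ℝ) (hq : q = (σ wL - σ wR) / (wL - wR)) :
    (∀ w : ℝ, ((wL < w ∧ w < wR) ∨ (wR < w ∧ w < wL)) →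
        (σ w - σ wR) / (w - wR) ≥ q) ↔
    (wR - wL) * (wR + 2 * wL) ≥ 0 := by
  have hslope (w : ℝ) (hw : w ≠ wR) :
      (σ w - σ wR) / (w - wR) - q = (w - wL) * (w + wL + wR) := by
    rw [hq, hσ, hσ, hσ, cubic_chord_slope m _ _ hw, cubic_chord_slope m _ _ hne]
    ring
  rw [ge_iff_le, ← forall_between_mul_nonneg_iff hne]
  refine forall_congr' fun w => imp_congr_right fun hw => ?_
  have hw : w ≠ wR := by
    rcases hw with ⟨-, h⟩ | ⟨h, -⟩
    exacts [h.ne, h.ne']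
  rw [ge_iff_le, ← sub_nonneg, hslope w hw]

/-- For `σ(w) = w³ + m·w`, `m ≥ 0`, `w_L ≠ w_R`, the Liu criterion for the 1-shock
from `w_L` to `w_R` (for every `w` strictly between `w_L` and `w_R`,
`(σ(w)-σ(w_R))/(w-w_R) ≥ q` with `q` the chord slope) holds iff
`(w_R - w_L)(w_R + 2w_L) ≥ 0`. -/
theorem stmt_8 (m : ℝ) (hm : 0 ≤ m) (σ : ℝ → ℝ) (hσ : ∀ w, σ w = w ^ 3 + m * w)
    (wL wR : ℝ) (hne : wL ≠ wR)
    (q : ℝ) (hq : q = (σ wL - σ wR) / (wL - wR)) :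
    (∀ w : ℝ, ((wL < w ∧ w < wR) ∨ (wR < w ∧ w < wL)) →
        (σ w - σ wR) / (w - wR) ≥ q) ↔
    (wR - wL) * (wR + 2 * wL) ≥ 0 :=
  stmt_8_general m σ hσ wL wR hne q hq
end

section
/- Let m ≥ 0 and σ(w) = w³ + m·w, with entropy 𝒰(v,w) = v²/2 + w⁴/4 + m·w²/2 and entropy flux 𝒲(v,w) = −v·(w³ + m·w). If (v_L, w_L), (v_R, w_R) ∈ ℝ² and c ∈ ℝ satisfy the Rankine–Hugoniot relations c·(v_L − v_R) = σ(w_R) − σ(w_L) and c·(w_L − w_R) = v_R − v_L, then the entropy dissipation D = c·(𝒰(v_L,w_L) − 𝒰(v_R,w_R)) − (𝒲(v_L,w_L) − 𝒲(v_R,w_R)) equals −c·(w_L − w_R)³·(w_L + w_R)/4. -/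
/-!
For the p-system with an arbitrary stress `σ` and a primitive `Φ` of it, the Rankine–Hugoniot
relations turn the dissipation of the entropy pair `(v²/2 + Φ(w), -v σ(w))` into `c` times the
error of the trapezoidal rule for `∫_{w_R}^{w_L} σ`. For a cubic stress that error is
`-(w_L - w_R)³ (w_L + w_R) / 4`, the linear part `m w` being integrated exactly.
-/

theorem pSystem_entropyDissipation_eq (σ Φ : ℝ → ℝ) {vL wL vR wR c : ℝ}
    (h1 : c * (vL - vR) = σ wR - σ wL) (h2 : c * (wL - wR) = vR - vL) :
    c * ((vL ^ 2 / 2 + Φ wL) - (vR ^ 2 / 2 + Φ wR)) - (-(vL * σ wL) - -(vR * σ wR)) =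
      c * (Φ wL - Φ wR - (wL - wR) * (σ wL + σ wR) / 2) := by
  linear_combination (vL + vR) / 2 * h1 + (σ wL + σ wR) / 2 * h2

theorem cubic_trapezoidError_eq (m a b : ℝ) :
    (a ^ 4 / 4 + m * a ^ 2 / 2) - (b ^ 4 / 4 + m * b ^ 2 / 2)
        - (a - b) * ((a ^ 3 + m * a) + (b ^ 3 + m * b)) / 2 =
      -(a - b) ^ 3 * (a + b) / 4 := by
  ring

theorem stmt_9_general (m : ℝ) (σ : ℝ → ℝ) (hσ : ∀ w, σ w = w ^ 3 + m * w)
    (U W : ℝ → ℝ → ℝ)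
    (hU : ∀ v w, U v w = v ^ 2 / 2 + w ^ 4 / 4 + m * w ^ 2 / 2)
    (hW : ∀ v w, W v w = -(v * (w ^ 3 + m * w)))
    (vL wL vR wR c : ℝ)
    (h1 : c * (vL - vR) = σ wR - σ wL)
    (h2 : c * (wL - wR) = vR - vL)
    (D : ℝ) (hD : D = c * (U vL wL - U vR wR) - (W vL wL - W vR wR)) :
    D = -c * (wL - wR) ^ 3 * (wL + wR) / 4 := by
  have hdiss := pSystem_entropyDissipation_eq σ (fun w ↦ w ^ 4 / 4 + m * w ^ 2 / 2) h1 h2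
  simp only [hσ] at hdiss
  rw [hD, hU, hU, hW, hW]
  linear_combination hdiss + c * cubic_trapezoidError_eq m wL wR

/-- For `σ(w) = w³ + m·w`, entropy `𝒰(v,w) = v²/2 + w⁴/4 + m·w²/2`, entropy flux
`𝒲(v,w) = -v·σ(w)`: under the Rankine–Hugoniot relations, the entropy dissipation
equals `-c·(w_L - w_R)³·(w_L + w_R)/4`. -/
theorem stmt_9 (m : ℝ) (hm : 0 ≤ m) (σ : ℝ → ℝ) (hσ : ∀ w, σ w = w ^ 3 + m * w)
    (U W : ℝ → ℝ → ℝ)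
    (hU : ∀ v w, U v w = v ^ 2 / 2 + w ^ 4 / 4 + m * w ^ 2 / 2)
    (hW : ∀ v w, W v w = -(v * (w ^ 3 + m * w)))
    (vL wL vR wR c : ℝ)
    (h1 : c * (vL - vR) = σ wR - σ wL)
    (h2 : c * (wL - wR) = vR - vL)
    (D : ℝ) (hD : D = c * (U vL wL - U vR wR) - (W vL wL - W vR wR)) :
    D = -c * (wL - wR) ^ 3 * (wL + wR) / 4 :=
  stmt_9_general m σ hσ U W hU hW vL wL vR wR c h1 h2 D hD
end

section
/- Let m > 0, σ(w) = w³ + m·w, 𝒰(v,w) = v²/2 + w⁴/4 + m·w²/2, 𝒲(v,w) = −v·(w³ + m·w). Suppose (v_L, w_L), (v_R, w_R) with w_L ≠ w_R satisfy the Rankine–Hugoniot relations with speed c, and let D = c·(𝒰(v_L,w_L) − 𝒰(v_R,w_R)) − (𝒲(v_L,w_L) − 𝒲(v_R,w_R)). Then: (i) if c < 0 (a 1-shock), D ≤ 0 if and only if w_R² ≥ w_L²; (ii) if c > 0 (a 2-shock), D ≤ 0 if and only if w_L² ≥ w_R²; (iii) if c ≠ 0, D = 0 if and only if w_R = −w_L.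 -/
/-!
For the p-system with entropy `U = v²/2 + Ψ(w)`, `Ψ' = σ`, and flux `W = -v σ(w)`, the
Rankine–Hugoniot relations eliminate `v` from the dissipation, which becomes `c` times the error
of the trapezoidal rule for `∫_{w_R}^{w_L} σ`. For the cubic stress the linear part of `σ` is
integrated exactly and the error is `(w_L - w_R)² (w_R² - w_L²) / 4`, so the sign of the
dissipation is that of `c · (w_R² - w_L²)`.
-/

theorem mul_nonpos_iff_of_pos_left {α : Type*} [Ring α] [LinearOrder α] [IsStrictOrderedRing α]
    {a b : α} (ha : 0 < a) : a * b ≤ 0 ↔ b ≤ 0 := by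
  rw [← neg_nonneg, ← mul_neg, mul_nonneg_iff_of_pos_left ha, neg_nonneg]

theorem mul_nonpos_iff_of_neg_left {α : Type*} [Ring α] [LinearOrder α] [IsStrictOrderedRing α]
    {a b : α} (ha : a < 0) : a * b ≤ 0 ↔ 0 ≤ b := by
  rw [← neg_nonneg, ← neg_mul, mul_nonneg_iff_of_pos_left (neg_pos.2 ha)]

theorem shock_dissipation_eq_trapezoid_error (σ Ψ : ℝ → ℝ) (U W : ℝ → ℝ → ℝ)
    (hU : ∀ v w, U v w = v ^ 2 / 2 + Ψ w) (hW : ∀ v w, W v w = -(v * σ w))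
    {vL wL vR wR c : ℝ} (h1 : c * (vL - vR) = σ wR - σ wL) (h2 : c * (wL - wR) = vR - vL) :
    c * (U vL wL - U vR wR) - (W vL wL - W vR wR) =
      c * (Ψ wL - Ψ wR - (wL - wR) * (σ wL + σ wR) / 2) := by
  rw [hU, hU, hW, hW]
  linear_combination (vL + vR) / 2 * h1 + (σ wL + σ wR) / 2 * h2

theorem cubic_trapezoid_error (m a b : ℝ) :
    (a ^ 4 / 4 + m * a ^ 2 / 2) - (b ^ 4 / 4 + m * b ^ 2 / 2)
      - (a - b) * ((a ^ 3 + m * a) + (b ^ 3 + m * b)) / 2 = (a - b) ^ 2 * (b ^ 2 - a ^ 2) / 4 := by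
  ring

theorem stmt_10_general (m : ℝ) (σ : ℝ → ℝ) (hσ : ∀ w, σ w = w ^ 3 + m * w)
    (U W : ℝ → ℝ → ℝ)
    (hU : ∀ v w, U v w = v ^ 2 / 2 + w ^ 4 / 4 + m * w ^ 2 / 2)
    (hW : ∀ v w, W v w = -(v * (w ^ 3 + m * w)))
    (vL wL vR wR c : ℝ) (hne : wL ≠ wR)
    (h1 : c * (vL - vR) = σ wR - σ wL)
    (h2 : c * (wL - wR) = vR - vL)
    (D : ℝ) (hD : D = c * (U vL wL - U vR wR) - (W vL wL - W vR wR)) :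
    (c < 0 → (D ≤ 0 ↔ wR ^ 2 ≥ wL ^ 2)) ∧
    (c > 0 → (D ≤ 0 ↔ wL ^ 2 ≥ wR ^ 2)) ∧
    (c ≠ 0 → (D = 0 ↔ wR = -wL)) := by
  have hD' : D = c * ((wL - wR) ^ 2 / 4) * (wR ^ 2 - wL ^ 2) := by
    rw [hD, shock_dissipation_eq_trapezoid_error σ (fun w => w ^ 4 / 4 + m * w ^ 2 / 2) U W
      (fun v w => by rw [hU, add_assoc]) (fun v w => by rw [hW, hσ]) h1 h2, hσ, hσ,
      cubic_trapezoid_error]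
    ring
  have hk : 0 < (wL - wR) ^ 2 / 4 := by
    have := sub_ne_zero.2 hne
    positivity
  refine ⟨fun hc => ?_, fun hc => ?_, fun hc => ?_⟩
  · rw [hD', mul_nonpos_iff_of_neg_left (mul_neg_of_neg_of_pos hc hk), sub_nonneg]
  · rw [hD', mul_nonpos_iff_of_pos_left (mul_pos hc hk), sub_nonpos]
  · rw [hD', mul_eq_zero_iff_left (mul_ne_zero hc hk.ne'), sub_eq_zero,
      sq_eq_sq_iff_eq_or_eq_neg, or_iff_right hne.symm]

/-- For `σ(w) = w³ + m·w`, `m > 0`, a shock satisfying the Rankine–Hugoniot relations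
with speed `c` and dissipation `D`: (i) if `c < 0`, `D ≤ 0 ↔ w_R² ≥ w_L²`;
(ii) if `c > 0`, `D ≤ 0 ↔ w_L² ≥ w_R²`; (iii) if `c ≠ 0`, `D = 0 ↔ w_R = -w_L`. -/
theorem stmt_10 (m : ℝ) (hm : 0 < m) (σ : ℝ → ℝ) (hσ : ∀ w, σ w = w ^ 3 + m * w)
    (U W : ℝ → ℝ → ℝ)
    (hU : ∀ v w, U v w = v ^ 2 / 2 + w ^ 4 / 4 + m * w ^ 2 / 2)
    (hW : ∀ v w, W v w = -(v * (w ^ 3 + m * w)))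
    (vL wL vR wR c : ℝ) (hne : wL ≠ wR)
    (h1 : c * (vL - vR) = σ wR - σ wL)
    (h2 : c * (wL - wR) = vR - vL)
    (D : ℝ) (hD : D = c * (U vL wL - U vR wR) - (W vL wL - W vR wR)) :
    (c < 0 → (D ≤ 0 ↔ wR ^ 2 ≥ wL ^ 2)) ∧
    (c > 0 → (D ≤ 0 ↔ wL ^ 2 ≥ wR ^ 2)) ∧
    (c ≠ 0 → (D = 0 ↔ wR = -wL)) :=
  stmt_10_general m σ hσ U W hU hW vL wL vR wR c hne h1 h2 D hD
end

section
/- Let m > 0, σ(w) = w³ + m·w, and suppose (v_L, w_L), (v_R, w_R) with w_L ≠ w_R satisfy the Rankine–Hugoniot relations with speed c = −s(w_L, w_R) < 0 (a 1-shock), w_L·w_R ≥ 0, and the Liu criterion (w_R − w_L)·(w_R + 2·w_L) ≥ 0. Then either (w_R < w_L ≤ 0 and v_R < v_L) or (0 ≤ w_L < w_R and v_R > v_L). -/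
/-!
The secant slope of `σ(w) = w³ + m·w` is `w_L² + w_L·w_R + w_R² + m > 0`, so the shock speed
`c = -s` is strictly negative and the second Rankine–Hugoniot relation `v_R - v_L = c·(w_L - w_R)`
makes the jump in `v` opposite in sign to the jump in `w`. When `w` does not change sign, the
Liu criterion rules out the two orderings `w_L < w_R ≤ 0` and `0 ≤ w_R < w_L`, in which
`w_R + 2·w_L` and `w_R - w_L` have opposite signs.
-/

lemma cubic_secant_slope {m : ℝ} {σ : ℝ → ℝ} (hσ : ∀ w, σ w = w ^ 3 + m * w) {wL wR : ℝ}
    (hne : wL ≠ wR) : (σ wL - σ wR) / (wL - wR) = wL ^ 2 + wL * wR + wR ^ 2 + m := by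
  have hd : wL - wR ≠ 0 := sub_ne_zero.mpr hne
  rw [hσ, hσ, div_eq_iff hd]
  ring

lemma cubic_secant_slope_pos {m : ℝ} (hm : 0 < m) {σ : ℝ → ℝ} (hσ : ∀ w, σ w = w ^ 3 + m * w)
    {wL wR : ℝ} (hne : wL ≠ wR) : 0 < (σ wL - σ wR) / (wL - wR) := by
  rw [cubic_secant_slope hσ hne]
  nlinarith [sq_nonneg (wL + wR), sq_nonneg wL, sq_nonneg wR]

lemma liu_same_sign_cases {wL wR : ℝ} (hne : wL ≠ wR) (hsign : wL * wR ≥ 0)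
    (hLiu : (wR - wL) * (wR + 2 * wL) ≥ 0) :
    (wR < wL ∧ wL ≤ 0) ∨ (0 ≤ wL ∧ wL < wR) := by
  rcases hne.lt_or_gt with hlt | hlt
  · refine Or.inr ⟨?_, hlt⟩
    by_contra! hwL
    have hwR : wR ≤ 0 := nonpos_of_mul_nonneg_right hsign hwL
    nlinarith
  · refine Or.inl ⟨hlt, ?_⟩
    by_contra! hwL
    have hwR : 0 ≤ wR := nonneg_of_mul_nonneg_right (mul_comm wL wR ▸ hsign) hwL
    nlinarith

theorem stmt_13_general (m : ℝ) (hm : 0 < m) (σ : ℝ → ℝ) (hσ : ∀ w, σ w = w ^ 3 + m * w)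
    (vL wL vR wR : ℝ) (hne : wL ≠ wR)
    (c : ℝ) (hc : c = -Real.sqrt ((σ wL - σ wR) / (wL - wR)))
    (h2 : c * (wL - wR) = vR - vL)
    (hsign : wL * wR ≥ 0)
    (hLiu : (wR - wL) * (wR + 2 * wL) ≥ 0) :
    (wR < wL ∧ wL ≤ 0 ∧ vR < vL) ∨ (0 ≤ wL ∧ wL < wR ∧ vR > vL) := by
  have hc_neg : c < 0 := hc ▸ neg_neg_of_pos (Real.sqrt_pos.mpr (cubic_secant_slope_pos hm hσ hne))
  rcases liu_same_sign_cases hne hsign hLiu with ⟨hlt, hwL⟩ | ⟨hwL, hlt⟩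
  · have hjump : vR - vL < 0 := h2 ▸ mul_neg_of_neg_of_pos hc_neg (sub_pos.mpr hlt)
    exact Or.inl ⟨hlt, hwL, sub_neg.mp hjump⟩
  · have hjump : 0 < vR - vL := h2 ▸ mul_pos_of_neg_of_neg hc_neg (sub_neg.mpr hlt)
    exact Or.inr ⟨hwL, hlt, sub_pos.mp hjump⟩

/-- For `σ(w) = w³ + m·w`, `m > 0`: a 1-shock (speed `c = -s(w_L,w_R) < 0`) satisfying
the Rankine–Hugoniot relations, with `w_L·w_R ≥ 0` and the Liu criterion
`(w_R - w_L)(w_R + 2w_L) ≥ 0`, satisfies either (`w_R < w_L ≤ 0` and `v_R < v_L`)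
or (`0 ≤ w_L < w_R` and `v_R > v_L`). -/
theorem stmt_13 (m : ℝ) (hm : 0 < m) (σ : ℝ → ℝ) (hσ : ∀ w, σ w = w ^ 3 + m * w)
    (vL wL vR wR : ℝ) (hne : wL ≠ wR)
    (c : ℝ) (hc : c = -Real.sqrt ((σ wL - σ wR) / (wL - wR)))
    (h1 : c * (vL - vR) = σ wR - σ wL)
    (h2 : c * (wL - wR) = vR - vL)
    (hsign : wL * wR ≥ 0)
    (hLiu : (wR - wL) * (wR + 2 * wL) ≥ 0) :
    (wR < wL ∧ wL ≤ 0 ∧ vR < vL) ∨ (0 ≤ wL ∧ wL < wR ∧ vR > vL) :=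
  stmt_13_general m hm σ hσ vL wL vR wR hne c hc h2 hsign hLiu
end

section
/- Let m > 0, σ(w) = w³ + m·w, and suppose (v_L, w_L), (v_R, w_R) with w_L ≠ w_R satisfy the Rankine–Hugoniot relations with speed c = +s(w_L, w_R) > 0 (a 2-shock), w_L·w_R ≥ 0, and the Liu criterion for 2-shocks (w_L − w_R)·(w_L + 2·w_R) ≥ 0. Then either (w_L < w_R ≤ 0 and v_R < v_L) or (0 ≤ w_R < w_L and v_R > v_L). -/
/-! Since `σ(w_L) - σ(w_R) = (w_L - w_R)(w_L² + w_L w_R + w_R² + m)`, the speed is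
`c = √(w_L² + w_L w_R + w_R² + m) > 0`, so the second Rankine–Hugoniot relation
`v_R - v_L = c (w_L - w_R)` makes `v` jump opposite to `w`. The Liu criterion forces
`w_L + 2 w_R` to have the sign of `w_L - w_R`; were `w_R` of the opposite sign, this would
put `w_L` strictly on the other side of zero from `w_R`, contradicting `w_L w_R ≥ 0`. -/

lemma cubic_stress_slope {m a b : ℝ} (hab : a ≠ b) :
    ((a ^ 3 + m * a) - (b ^ 3 + m * b)) / (a - b) = a ^ 2 + a * b + b ^ 2 + m := by
  field_simp [sub_ne_zero.mpr hab]
  ring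

lemma cubic_shock_speed_pos {m a b : ℝ} (hm : 0 < m) (hab : a ≠ b) :
    0 < √(((a ^ 3 + m * a) - (b ^ 3 + m * b)) / (a - b)) := by
  rw [cubic_stress_slope hab, Real.sqrt_pos]
  nlinarith [sq_nonneg (a + b), sq_nonneg a, sq_nonneg b]

lemma liu_two_shock_sign {wL wR : ℝ} (hne : wL ≠ wR) (hsign : 0 ≤ wL * wR)
    (hLiu : 0 ≤ (wL - wR) * (wL + 2 * wR)) :
    (wL < wR ∧ wR ≤ 0) ∨ (0 ≤ wR ∧ wR < wL) := by
  rcases hne.lt_or_gt with hlt | hgt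
  · refine .inl ⟨hlt, ?_⟩
    by_contra! hR
    have hsum : wL + 2 * wR ≤ 0 := nonpos_of_mul_nonneg_right hLiu (sub_neg.mpr hlt)
    have : wL * wR < 0 := mul_neg_of_neg_of_pos (by linarith) hR
    linarith
  · refine .inr ⟨?_, hgt⟩
    by_contra! hR
    have hsum : 0 ≤ wL + 2 * wR := nonneg_of_mul_nonneg_right hLiu (sub_pos.mpr hgt)
    have : wL * wR < 0 := mul_neg_of_pos_of_neg (by linarith) hR
    linarith

theorem stmt_14_general (m : ℝ) (hm : 0 < m) (σ : ℝ → ℝ) (hσ : ∀ w, σ w = w ^ 3 + m * w)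
    (vL wL vR wR : ℝ) (hne : wL ≠ wR)
    (c : ℝ) (hc : c = Real.sqrt ((σ wL - σ wR) / (wL - wR)))
    (h2 : c * (wL - wR) = vR - vL)
    (hsign : wL * wR ≥ 0)
    (hLiu : (wL - wR) * (wL + 2 * wR) ≥ 0) :
    (wL < wR ∧ wR ≤ 0 ∧ vR < vL) ∨ (0 ≤ wR ∧ wR < wL ∧ vR > vL) := by
  have hc_pos : 0 < c := by
    rw [hc, hσ, hσ]
    exact cubic_shock_speed_pos hm hne
  rcases liu_two_shock_sign hne hsign hLiu with ⟨hlt, hR⟩ | ⟨hR, hgt⟩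
  · have := mul_neg_of_pos_of_neg hc_pos (sub_neg.mpr hlt)
    exact .inl ⟨hlt, hR, by linarith⟩
  · have := mul_pos hc_pos (sub_pos.mpr hgt)
    exact .inr ⟨hR, hgt, by linarith⟩

/-- For `σ(w) = w³ + m·w`, `m > 0`: a 2-shock (speed `c = +s(w_L,w_R) > 0`) satisfying
the Rankine–Hugoniot relations, with `w_L·w_R ≥ 0` and the Liu criterion for 2-shocks
`(w_L - w_R)(w_L + 2w_R) ≥ 0`, satisfies either (`w_L < w_R ≤ 0` and `v_R < v_L`)
or (`0 ≤ w_R < w_L` and `v_R > v_L`). -/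
theorem stmt_14 (m : ℝ) (hm : 0 < m) (σ : ℝ → ℝ) (hσ : ∀ w, σ w = w ^ 3 + m * w)
    (vL wL vR wR : ℝ) (hne : wL ≠ wR)
    (c : ℝ) (hc : c = Real.sqrt ((σ wL - σ wR) / (wL - wR)))
    (h1 : c * (vL - vR) = σ wR - σ wL)
    (h2 : c * (wL - wR) = vR - vL)
    (hsign : wL * wR ≥ 0)
    (hLiu : (wL - wR) * (wL + 2 * wR) ≥ 0) :
    (wL < wR ∧ wR ≤ 0 ∧ vR < vL) ∨ (0 ≤ wR ∧ wR < wL ∧ vR > vL) :=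
  stmt_14_general m hm σ hσ vL wL vR wR hne c hc h2 hsign hLiu
end

section
/- Let U_L, U_R ∈ ℝ, g : ℝ → ℝ, and s ∈ ℝ satisfying the Rankine–Hugoniot relation s·(U_L − U_R) = g(U_L) − g(U_R). Let x_d ∈ ℝ and define u(t,x) = U_L if x < x_d + s·t and u(t,x) = U_R if x ≥ x_d + s·t. Then for all reals a ≤ b, V ∈ ℝ, and Δt > 0: ∫_{a+V·Δt}^{b+V·Δt} u(Δt, x) dx − ∫_a^b u(0, x) dx = − [ ∫₀^{Δt} ( g(u(t, b + V·t)) − V·u(t, b + V·t) ) dt − ∫₀^{Δt} ( g(u(t, a + V·t)) − V·u(t, a + V·t) ) dt ]. -/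
/-!
The solution is a step function of `x`, and along a moving interface `x = c + V t` it is a step
function of `t`, jumping when the shock crosses the interface. Every integral in the identity is
therefore an explicit combination of ramps `max (·) 0`. By Rankine–Hugoniot the jump of the
Lagrangian flux `g u - V u` is `(s - V) (U_L - U_R)`, proportional to the relative speed of shock
and interface, and the two sides reduce to the same combination of ramps.
-/

open Set MeasureTheory

theorem intervalIntegrable_ite_lt {μ : Measure ℝ} [IsLocallyFiniteMeasure μ] (A B p c d : ℝ) :
    IntervalIntegrable (fun x => if x < p then A else B) μ c d := by
  rcases le_total A B with h | h
  · refine Monotone.intervalIntegrable fun x y hxy => ?_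
    split_ifs <;> first | rfl | exact h | (exfalso; linarith)
  · refine Antitone.intervalIntegrable fun x y hxy => ?_
    split_ifs <;> first | rfl | exact h | (exfalso; linarith)

theorem integral_ite_lt (A B p c d : ℝ) :
    ∫ x in c..d, (if x < p then A else B)
      = B * (d - c) + (A - B) * (max (p - c) 0 - max (p - d) 0) := by
  have hprim : ∀ x, HasDerivWithinAt (fun y => B * y - (A - B) * max (p - y) 0)
      (if x < p then A else B) (Ioi x) x := by
    intro x
    split_ifs with hx
    · have hlin : HasDerivAt (fun y => A * y - (A - B) * p) A x := by
        simpa using ((hasDerivAt_id x).const_mul A).sub_const ((A - B) * p)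
      refine (hlin.congr_of_eventuallyEq ?_).hasDerivWithinAt
      filter_upwards [Iio_mem_nhds hx] with y hy
      rw [max_eq_left (sub_nonneg.2 hy.le)]
      ring
    · have hlin : HasDerivWithinAt (fun y => B * y) B (Ioi x) x := by
        simpa using ((hasDerivAt_id x).const_mul B).hasDerivWithinAt
      refine hlin.congr (fun y hy => ?_) ?_
      · rw [max_eq_right (by linarith [mem_Ioi.1 hy, not_lt.1 hx]), mul_zero, sub_zero]
      · rw [max_eq_right (by linarith [not_lt.1 hx]), mul_zero, sub_zero]
  rw [intervalIntegral.integral_eq_sub_of_hasDeriv_right (by fun_prop)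
    (fun x _ => hprim x) (intervalIntegrable_ite_lt A B p c d)]
  ring

-- A jump that is a multiple of the slope `k` is what makes the formula survive `k = 0`.
theorem integral_ite_mul_lt (B D k q T : ℝ) :
    ∫ t in (0:ℝ)..T, (if k * t < q then B - k * D else B)
      = B * T - D * (max q 0 - max (q - k * T) 0) := by
  rcases eq_or_ne k 0 with rfl | hk
  · simp [mul_comm]
  · refine mul_left_cancel₀ hk ?_
    rw [intervalIntegral.mul_integral_comp_mul_left (f := fun y => if y < q then B - k * D else B),
      integral_ite_lt, mul_zero, sub_zero, sub_zero]
    ring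

/-- Exact integral conservation identity for a traveling discontinuity satisfying the
Rankine–Hugoniot relation `s·(U_L - U_R) = g(U_L) - g(U_R)`: over the space-time
trapezoid swept by a cell `[a,b]` moving at mesh speed `V` during `[0, Δt]`, the change
of the cell integral equals minus the difference of the Lagrangian flux integrals
`g(u) - V·u` along the two moving interfaces. -/
theorem stmt_19 (UL UR : ℝ) (g : ℝ → ℝ) (s : ℝ)
    (hRH : s * (UL - UR) = g UL - g UR)
    (xd : ℝ) (u : ℝ → ℝ → ℝ)
    (hu : ∀ t x, u t x = if x < xd + s * t then UL else UR) :
    ∀ (a b : ℝ), a ≤ b → ∀ (V : ℝ) (Δt : ℝ), 0 < Δt →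
      (∫ x in (a + V * Δt)..(b + V * Δt), u Δt x) - (∫ x in a..b, u 0 x) =
        -((∫ t in (0:ℝ)..Δt, (g (u t (b + V * t)) - V * u t (b + V * t)))
          - (∫ t in (0:ℝ)..Δt, (g (u t (a + V * t)) - V * u t (a + V * t)))) := by
  intro a b _ V Δt _
  have cell (t c d : ℝ) : ∫ x in c..d, u t x
      = UR * (d - c) + (UL - UR) * (max (xd + s * t - c) 0 - max (xd + s * t - d) 0) := by
    simp only [hu, integral_ite_lt]
  have interface (c : ℝ) : ∫ t in (0:ℝ)..Δt, (g (u t (c + V * t)) - V * u t (c + V * t))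
      = (g UR - V * UR) * Δt
        - (UL - UR) * (max (xd - c) 0 - max (xd - c - (V - s) * Δt) 0) := by
    rw [← integral_ite_mul_lt]
    refine intervalIntegral.integral_congr fun t _ => ?_
    have hcross : c + V * t < xd + s * t ↔ (V - s) * t < xd - c := by
      constructor <;> intro h <;> linarith
    simp only [hu, hcross]
    split_ifs <;> linarith
  rw [cell, cell, interface, interface]
  ring_nf
end
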